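/- Let n ≥ 1, ν > 0, and let f : ℍⁿ → ℝ be continuous, positive, attaining its maximum at the origin, with α := lim_{|ζ|_H→∞} |ζ|_H^ν f(ζ) existing and positive, β := α^{2/ν} f(0)^{−2/ν}, and such that for every ξ ∈ ℍⁿ there exists λ(ξ) > 0 with (λ(ξ)/d_H(ξ,ζ))^ν · f(Φ_{ξ,λ(ξ)}^β(ζ)) = f(ζ) for all ζ ≠ ξ. Then for every (z',t') ∈ ℍⁿ the partial derivative of f in t exists at (z',t') and satisfies ∂f/∂t (z',t') = −(ν/2) · α^{−4/ν} · t' · f(z',t')^{1+4/ν}; consequently there exists a function F : ℂⁿ → ℝ such that f(z,t) = (F(z)² + α^{−4/ν} t²)^{−ν/4} for all (z,t) ∈ ℍⁿ. -/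

import Mathlib

open Complex Filter Topology MeasureTheory

noncomputable section

/-- The Heisenberg group ℍⁿ as ℂⁿ × ℝ. -/
abbrev Heis (n : ℕ) := (Fin n → ℂ) × ℝ

namespace Heis

variable {n : ℕ}

/-- Hermitian inner product ⟨z,z'⟩ = Σ_j z_j conj(z'_j). -/
def hermInner (z w : Fin n → ℂ) : ℂ := ∑ j, z j * (starRingEnd ℂ) (w j)

/-- Squared Euclidean norm |z|² = Σ_j |z_j|². -/
def nsq (z : Fin n → ℂ) : ℝ := ∑ j, Complex.normSq (z j)

/-- Group law (z,t)·(z',t') = (z+z', t+t'+2 Im⟨z,z'⟩). -/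
def hmul (a b : Heis n) : Heis n :=
  (a.1 + b.1, a.2 + b.2 + 2 * (hermInner a.1 b.1).im)

/-- Group inverse: ζ⁻¹ = −ζ. -/
def hinv (a : Heis n) : Heis n := (-a.1, -a.2)

/-- Korányi norm |(z,t)|_H = (|z|⁴ + t²)^{1/4}. -/
def korNorm (a : Heis n) : ℝ := ((nsq a.1) ^ 2 + a.2 ^ 2) ^ ((1 : ℝ)/4)

/-- Korányi distance d_H(ξ,ζ) = |ζ⁻¹·ξ|_H. -/
def dH (a b : Heis n) : ℝ := korNorm (hmul (hinv b) a)

/-- Open Korányi ball B_λ(ξ). -/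
def ball (ξ : Heis n) (lam : ℝ) : Set (Heis n) := {ζ | dH ξ ζ < lam}

/-- Left translation τ_ξ. -/
def tau (ξ ζ : Heis n) : Heis n := hmul ξ ζ

/-- Dilation δ_λ(z,t) = (λz, λ²t). -/
def dil (lam : ℝ) (a : Heis n) : Heis n := (fun j => (lam : ℂ) * a.1 j, lam ^ 2 * a.2)

/-- Rotation ρ_M(z,t) = (Mz,t). -/
def rot (M : Matrix (Fin n) (Fin n) ℂ) (a : Heis n) : Heis n := (M.mulVec a.1, a.2)

/-- Inversion ι(z,t) = (conj z, −t). -/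
def iota (a : Heis n) : Heis n := (fun j => (starRingEnd ℂ) (a.1 j), -a.2)

/-- w = t + i|z|². -/
def wC (a : Heis n) : ℂ := (a.2 : ℂ) + Complex.I * ((nsq a.1 : ℝ) : ℂ)

/-- CR inversion 𝒥(z,t) = (z/w, −t/|w|²). -/
def crInv (a : Heis n) : Heis n :=
  (fun j => a.1 j / wC a, -a.2 / Complex.normSq (wC a))

/-- Angles θ_k for the rotation matrix M_{ξ,β}. -/
def theta (ξ : Heis n) (β : ℝ) (k : Fin n) : ℝ :=
  if ξ.1 k ≠ 0 then 2 * (ξ.1 k).arg + (wC ξ + Complex.I * (β : ℂ)).arg else 0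

/-- The unitary diagonal matrix M_{ξ,β} = diag(e^{iθ₁},…,e^{iθₙ}). -/
def Mmat (ξ : Heis n) (β : ℝ) : Matrix (Fin n) (Fin n) ℂ :=
  Matrix.diagonal fun k => Complex.exp (Complex.I * ((theta ξ β k : ℝ) : ℂ))

/-- Generalized CR inversion Φ_{ξ,λ}^β = τ_ξ ∘ ρ_{M_{ξ,β}} ∘ δ_{λ²} ∘ 𝒥 ∘ ι ∘ τ_ξ⁻¹. -/
def Phi (ξ : Heis n) (lam β : ℝ) (ζ : Heis n) : Heis n :=
  tau ξ (rot (Mmat ξ β) (dil (lam ^ 2) (crInv (iota (hmul (hinv ξ) ζ)))))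

/-- Direction of the vector field X_j at p. -/
def XVec (j : Fin n) (p : Heis n) : Heis n := (Pi.single j (1 : ℂ), 2 * (p.1 j).im)

/-- Direction of the vector field Y_j at p. -/
def YVec (j : Fin n) (p : Heis n) : Heis n := (Pi.single j Complex.I, -2 * (p.1 j).re)

/-- The vector field X_j acting on functions. -/
def Xop (j : Fin n) (u : Heis n → ℝ) (p : Heis n) : ℝ := fderiv ℝ u p (XVec j p)

/-- The vector field Y_j acting on functions. -/
def Yop (j : Fin n) (u : Heis n → ℝ) (p : Heis n) : ℝ := fderiv ℝ u p (YVec j p)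

/-- Sub-Laplacian Δ_H = Σ_j (X_j² + Y_j²). -/
def subLap (u : Heis n → ℝ) (p : Heis n) : ℝ :=
  ∑ j, (Xop j (Xop j u) p + Yop j (Yop j u) p)

/-- Squared length of the horizontal gradient |∇_H u|² = Σ_j ((X_j u)² + (Y_j u)²). -/
def gradHSq (u : Heis n → ℝ) (p : Heis n) : ℝ :=
  ∑ j, ((Xop j u p) ^ 2 + (Yop j u p) ^ 2)

/-- Generalized Kelvin transform u_{ξ,λ}^β(η) = (λ/d_H(η,ξ))^{Q−2} u(Φ_{ξ,λ}^β(η)), Q−2 = 2n. -/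
def kelvin (u : Heis n → ℝ) (ξ : Heis n) (lam β : ℝ) (η : Heis n) : ℝ :=
  (lam / dH η ξ) ^ (2 * n) * u (Phi ξ lam β η)

/-- The filter |ζ|_H → ∞ on ℍⁿ. -/
def atInftyH (n : ℕ) : Filter (Heis n) := Filter.comap korNorm Filter.atTop

end Heis

open Heis

/-!
Put `g = f ^ (-4/ν)` and `A = α ^ (-4/ν)`, so that the symmetry reads
`g ζ = (d_H(ξ,ζ)/λ)⁴ g(Φ ζ)` and `g ζ ~ A |ζ|_H⁴` at infinity. On the vertical line through `ξ`,
`Φ_{ξ,λ}^β` is the inversion `ξ·(0,s) ↦ ξ·(0,λ⁴/s)`, and letting `s → ∞` gives `λ⁴ = g ξ / A`.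
Hence `φ t = g (z,t) - A t²` has the property that its chord slopes from any `t` are invariant
under the inversion `u ↦ t + (g (z,t)/A)/(u - t)`: slopes at small scale repeat slopes at large
scale, and the latter all approach the same values because `φ = o(t²)`. A fencing argument for
Dini derivatives then makes `φ` affine. Finally, the symmetry centred at `ξ` applied to the origin,
where `g` is minimal, gives `λ⁴ ≥ |ξ|_H⁴`, i.e. `g(z,t) ≥ A(|z|⁴ + t²)` for all `t`, which forces
the linear term to vanish.
-/

lemma eq_zero_of_forall_ne_zero_le_mul_add {c p q : ℝ} (h : ∀ t ≠ 0, c ≤ p * t + q) : p = 0 := by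
  by_contra hp
  have hM : 0 < |c| + |q| + 1 := by positivity
  have := h (-(|c| + |q| + 1) / p) (div_ne_zero (neg_ne_zero.2 hM.ne') hp)
  rw [mul_div_cancel₀ _ hp] at this
  linarith [neg_abs_le c, le_abs_self q]

lemma Filter.Tendsto.comp_const_add_div_sq {G : ℝ → ℝ} {A : ℝ}
    (h : Tendsto (fun T => G T / T ^ 2) atTop (𝓝 A)) (c : ℝ) :
    Tendsto (fun s => G (c + s) / s ^ 2) atTop (𝓝 A) := by
  have hratio : Tendsto (fun s : ℝ => (c / s + 1) ^ 2) atTop (𝓝 ((0 + 1) ^ 2)) :=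
    ((tendsto_const_nhds.div_atTop tendsto_id).add_const 1).pow 2
  have := (h.comp (tendsto_atTop_add_const_left _ c tendsto_id)).mul hratio
  rw [zero_add, one_pow, mul_one] at this
  refine this.congr' ?_
  filter_upwards [eventually_gt_atTop 0, eventually_gt_atTop (-c)] with s hs hcs
  have : c + s ≠ 0 := by linarith
  simp only [Function.comp_apply, id]
  field_simp

lemma Real.rpow_mul_rpow_neg_div {x y ν : ℝ} (hx : 0 ≤ x) (hy : 0 ≤ y) (hν : ν ≠ 0) :
    (x ^ ν * y) ^ (-(4 / ν)) = y ^ (-(4 / ν)) / x ^ 4 := by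
  rw [Real.mul_rpow (by positivity) hy, ← Real.rpow_mul hx,
    show ν * -(4 / ν) = -(4 : ℕ) by field_simp; norm_num, Real.rpow_neg hx, Real.rpow_natCast,
    inv_mul_eq_div]

lemma hasDerivAt_rpow_mul_sq_add {A C ν s : ℝ} (hν : ν ≠ 0) (h : 0 < A * s ^ 2 + C) :
    HasDerivAt (fun s => (A * s ^ 2 + C) ^ (-(ν / 4)))
      (-(ν / 2) * A * s * ((A * s ^ 2 + C) ^ (-(ν / 4))) ^ (1 + 4 / ν)) s := by
  have hinner : HasDerivAt (fun s => A * s ^ 2 + C) (A * (2 * s)) s := by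
    simpa using ((hasDerivAt_pow 2 s).const_mul A).add_const C
  convert hinner.rpow_const (p := -(ν / 4)) (Or.inl h.ne') using 1
  rw [← Real.rpow_mul h.le, show -(ν / 4) * (1 + 4 / ν) = -(ν / 4) - 1 by field_simp; ring]
  ring

def SlopeInversionInvariant (φ k : ℝ → ℝ) : Prop :=
  ∀ x z, x < z → slope φ x z = slope φ x (x + k x / (z - x))

namespace SlopeInversionInvariant

variable {φ k : ℝ → ℝ}

lemma neg (h : SlopeInversionInvariant φ k) : SlopeInversionInvariant (-φ) k := by
  intro x z hxz
  simp only [slope_neg_fun, Pi.neg_apply, h x z hxz]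

lemma tendsto_slope_sub_div_atTop (hφ : Tendsto (fun T => φ T / T ^ 2) atTop (𝓝 0)) (x : ℝ) :
    Tendsto (fun T => slope φ x T - φ T / T) atTop (𝓝 0) := by
  have hshift : Tendsto (fun T : ℝ => T - x) atTop atTop :=
    tendsto_atTop_add_const_right _ _ tendsto_id
  have hratio : Tendsto (fun T : ℝ => x * ((T - x) / T)⁻¹) atTop (𝓝 (x * 1⁻¹)) := by
    have h1 : Tendsto (fun T : ℝ => 1 - x / T) atTop (𝓝 (1 - 0)) :=
      tendsto_const_nhds.sub (tendsto_const_nhds.div_atTop tendsto_id)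
    rw [sub_zero] at h1
    refine tendsto_const_nhds.mul ((h1.congr' ?_).inv₀ one_ne_zero)
    filter_upwards [eventually_ne_atTop 0] with T hT
    field_simp
  have hlim := (hφ.mul hratio).sub (tendsto_const_nhds (x := φ x).div_atTop hshift)
  rw [zero_mul, sub_zero] at hlim
  refine hlim.congr' ?_
  filter_upwards [eventually_ne_atTop 0, eventually_gt_atTop x] with T hT hxT
  have : T - x ≠ 0 := sub_ne_zero.2 hxT.ne'
  rw [slope_def_field]
  field_simp
  ring

lemma frequently_nhdsGT_of_frequently_atTop (h : SlopeInversionInvariant φ k) {x : ℝ}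
    (hk : 0 < k x) {P : ℝ → Prop} (hP : ∃ᶠ T in atTop, P (slope φ x T)) :
    ∃ᶠ z in 𝓝[>] x, P (slope φ x z) := by
  have hinv : Tendsto (fun T => x + k x / (T - x)) atTop (𝓝[>] x) := by
    have hshift : Tendsto (fun T : ℝ => T - x) atTop atTop :=
      tendsto_atTop_add_const_right _ _ tendsto_id
    refine tendsto_nhdsWithin_iff.2 ⟨?_, ?_⟩
    · simpa using tendsto_const_nhds.add (tendsto_const_nhds.div_atTop hshift)
    · filter_upwards [eventually_gt_atTop x] with T hT
      exact lt_add_of_pos_right x (div_pos hk (sub_pos.2 hT))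
  refine hinv.frequently ((hP.and_eventually (eventually_gt_atTop x)).mono ?_)
  rintro T ⟨hPT, hxT⟩
  rwa [← h x T hxT]

variable (hφc : Continuous φ) (h : SlopeInversionInvariant φ k) (hk : ∀ x, 0 < k x)
  (hφ : Tendsto (fun T => φ T / T ^ 2) atTop (𝓝 0))
include hφc h hk hφ

lemma le_add_mul_of_frequently_div_lt {c : ℝ} (hc : ∀ r > c, ∃ᶠ T in atTop, φ T / T < r)
    {a b : ℝ} (hab : a ≤ b) : φ b ≤ φ a + c * (b - a) := by
  refine image_le_of_liminf_slope_right_le_deriv_boundary hφc.continuousOn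
    (B := fun x => φ a + c * (x - a)) (B' := fun _ => c)
    (by simp) (by fun_prop) (fun x _ => ?_) (fun x _ r hr => ?_) ⟨hab, le_rfl⟩
  · simpa using ((hasDerivAt_id x).sub_const a).const_mul c |>.const_add (φ a) |>.hasDerivWithinAt
  · obtain ⟨r', hcr', hr'r⟩ := exists_between hr
    have hclose : ∀ᶠ T in atTop, slope φ x T - φ T / T < r - r' :=
      (tendsto_slope_sub_div_atTop hφ x).eventually (gt_mem_nhds (sub_pos.2 hr'r))
    refine h.frequently_nhdsGT_of_frequently_atTop (hk x) (P := (· < r)) ?_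
    refine ((hc r' hcr').and_eventually hclose).mono fun T ⟨h₁, h₂⟩ => ?_
    linarith

lemma sub_le_mul {a b : ℝ} (hab : a ≤ b) : φ b - φ a ≤ (φ 1 - φ 0) * (b - a) := by
  suffices hc : ∀ r > φ 1 - φ 0, ∃ᶠ T in atTop, φ T / T < r by
    linarith [le_add_mul_of_frequently_div_lt hφc h hk hφ hc hab]
  intro r hr
  by_contra hnot
  have hneg : ∀ r' > -r, ∃ᶠ T in atTop, (-φ) T / T < r' := fun r' hr' =>
    ((not_frequently.1 hnot).mono fun T hT => by
      simp only [Pi.neg_apply, neg_div]; linarith [not_lt.1 hT]).frequently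
  have := le_add_mul_of_frequently_div_lt hφc.neg h.neg hk
    (by simpa [neg_div] using hφ.neg) hneg zero_le_one
  simp only [Pi.neg_apply] at this
  linarith

theorem eq_add_mul (t : ℝ) : φ t = φ 0 + (φ 1 - φ 0) * t := by
  have hsub : ∀ a b, a ≤ b → φ b - φ a = (φ 1 - φ 0) * (b - a) := fun a b hab => by
    have := sub_le_mul hφc.neg h.neg hk (by simpa [neg_div] using hφ.neg) hab
    simp only [Pi.neg_apply] at this
    linarith [sub_le_mul hφc h hk hφ hab]
  rcases le_total 0 t with ht | ht
  · linarith [hsub 0 t ht]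
  · linarith [hsub t 0 ht]

end SlopeInversionInvariant

lemma slopeInversionInvariant_sub_mul_sq {G : ℝ → ℝ} {A : ℝ} (hA : A ≠ 0) (hG0 : ∀ t, G t ≠ 0)
    (hG : ∀ t s, s ≠ 0 → G (t + s) = s ^ 2 / (G t / A) * G (t + G t / A / s)) :
    SlopeInversionInvariant (fun t => G t - A * t ^ 2) (fun t => G t / A) := by
  intro x z hxz
  have hs : z - x ≠ 0 := sub_ne_zero.2 hxz.ne'
  have hGz := hG x (z - x) hs
  rw [add_sub_cancel] at hGz
  have := hG0 x
  rw [slope_def_field, slope_def_field, hGz, add_sub_cancel_left]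
  generalize G (x + G x / A / (z - x)) = Gw
  field_simp
  ring

theorem exists_eq_mul_sq_add_mul_add {G : ℝ → ℝ} {A : ℝ} (hA : 0 < A) (hGc : Continuous G)
    (hGpos : ∀ t, 0 < G t)
    (hG : ∀ t s, s ≠ 0 → G (t + s) = s ^ 2 / (G t / A) * G (t + G t / A / s))
    (hlim : Tendsto (fun T => G T / T ^ 2) atTop (𝓝 A)) :
    ∃ p, ∀ t, G t = A * t ^ 2 + p * t + G 0 := by
  have hφ : Tendsto (fun T => (G T - A * T ^ 2) / T ^ 2) atTop (𝓝 0) := by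
    rw [← sub_self A]
    refine (hlim.sub_const A).congr' ?_
    filter_upwards [eventually_ne_atTop 0] with T hT
    field_simp
  refine ⟨G 1 - A - G 0, fun t => ?_⟩
  have := (slopeInversionInvariant_sub_mul_sq hA.ne' (fun t => (hGpos t).ne') hG).eq_add_mul
    (hGc.sub (by fun_prop)) (fun t => div_pos (hGpos t) hA) hφ t
  simp only [Pi.sub_apply] at this
  linear_combination this

namespace Heis

variable {n : ℕ}

lemma hermInner_neg_self_im (z : Fin n → ℂ) : (hermInner (-z) z).im = 0 := by
  simp [hermInner, Complex.mul_conj]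

lemma hmul_hinv_mk (z : Fin n → ℂ) (t t' : ℝ) : hmul (hinv (z, t)) (z, t') = (0, t' - t) := by
  simp only [hmul, hinv, neg_add_cancel, hermInner_neg_self_im, Prod.mk.injEq, true_and]
  ring

lemma korNorm_nonneg (a : Heis n) : 0 ≤ korNorm a := by
  unfold korNorm
  positivity

lemma korNorm_pow_four (a : Heis n) : korNorm a ^ 4 = nsq a.1 ^ 2 + a.2 ^ 2 := by
  rw [korNorm, ← Real.rpow_natCast, ← Real.rpow_mul (by positivity)]
  norm_num

lemma dH_nonneg (a b : Heis n) : 0 ≤ dH a b := korNorm_nonneg _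

lemma dH_zero_right (ξ : Heis n) : dH ξ 0 = korNorm ξ := by
  simp [dH, hinv, hmul, hermInner]

lemma dH_mk_add_pow_four (z : Fin n → ℂ) (t s : ℝ) : dH (z, t) (z, t + s) ^ 4 = s ^ 2 := by
  rw [dH, hmul_hinv_mk, korNorm_pow_four]
  simp [nsq]

lemma Phi_mk_add (z : Fin n → ℂ) (t lam β s : ℝ) :
    Phi (z, t) lam β (z, t + s) = (z, t + lam ^ 4 / s) := by
  rw [Phi, hmul_hinv_mk, add_sub_cancel_left]
  rcases eq_or_ne s 0 with rfl | hs
  · simp [iota, crInv, wC, nsq, dil, rot, tau, hmul, hermInner, ← Pi.zero_def]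
  · simp [iota, crInv, wC, nsq, dil, rot, tau, hmul, hermInner, ← Pi.zero_def]
    field_simp

def InversionSymmetricAt (g : Heis n → ℝ) (β : ℝ) (ξ : Heis n) (lam : ℝ) : Prop :=
  ∀ ζ, ζ ≠ ξ → g ζ = dH ξ ζ ^ 4 / lam ^ 4 * g (Phi ξ lam β ζ)

variable {g : Heis n → ℝ} {A β lam : ℝ}

lemma tendsto_mk_div_sq (hlim : Tendsto (fun p => g p / korNorm p ^ 4) (atInftyH n) (𝓝 A))
    (z : Fin n → ℂ) : Tendsto (fun T => g (z, T) / T ^ 2) atTop (𝓝 A) := by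
  have hpath : Tendsto (fun T : ℝ => ((z, T) : Heis n)) atTop (atInftyH n) := by
    rw [atInftyH, tendsto_comap_iff]
    refine (tendsto_rpow_atTop (by norm_num)).comp ?_
    exact tendsto_atTop_add_const_left _ (nsq z ^ 2) (tendsto_pow_atTop two_ne_zero)
  have hratio : Tendsto (fun T : ℝ => nsq z ^ 2 / T ^ 2 + 1) atTop (𝓝 (0 + 1)) :=
    (tendsto_const_nhds.div_atTop (tendsto_pow_atTop two_ne_zero)).add_const 1
  have := (hlim.comp hpath).mul hratio
  rw [zero_add, mul_one] at this
  refine this.congr' ?_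
  filter_upwards [eventually_ne_atTop 0] with T hT
  have hK : nsq z ^ 2 + T ^ 2 ≠ 0 := by positivity
  simp only [Function.comp_apply, korNorm_pow_four]
  field_simp

variable {ξ : Heis n}

lemma InversionSymmetricAt.apply_mk_add (hsym : InversionSymmetricAt g β ξ lam)
    {s : ℝ} (hs : s ≠ 0) : g (ξ.1, ξ.2 + s) = s ^ 2 / lam ^ 4 * g (ξ.1, ξ.2 + lam ^ 4 / s) := by
  obtain ⟨z, t⟩ := ξ
  rw [hsym _ (by simpa using hs), dH_mk_add_pow_four, Phi_mk_add]

lemma InversionSymmetricAt.mul_pow_four_eq (hsym : InversionSymmetricAt g β ξ lam)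
    (hg : Continuous g) (hlim : Tendsto (fun T => g (ξ.1, T) / T ^ 2) atTop (𝓝 A))
    (hlam : lam ≠ 0) : A * lam ^ 4 = g ξ := by
  have hnear : Tendsto (fun s => g (ξ.1, ξ.2 + lam ^ 4 / s)) atTop (𝓝 (g ξ)) := by
    have harg : Tendsto (fun s => ξ.2 + lam ^ 4 / s) atTop (𝓝 (ξ.2 + 0)) :=
      tendsto_const_nhds.add (tendsto_const_nhds.div_atTop tendsto_id)
    rw [add_zero] at harg
    exact (hg.tendsto ξ).comp (tendsto_const_nhds.prodMk_nhds harg)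
  have hfar := (hlim.comp_const_add_div_sq ξ.2).const_mul (lam ^ 4)
  refine (mul_comm _ _).trans (tendsto_nhds_unique (hfar.congr' ?_) hnear)
  filter_upwards [eventually_ne_atTop 0] with s hs
  rw [hsym.apply_mk_add hs]
  field_simp

lemma InversionSymmetricAt.korNorm_pow_four_le (hsym : InversionSymmetricAt g β ξ lam)
    (hg0 : 0 < g 0) (hmin : ∀ p, g 0 ≤ g p) (hlam : 0 < lam)
    (hξ : ξ ≠ 0) : korNorm ξ ^ 4 ≤ lam ^ 4 := by
  have h := hsym 0 hξ.symm
  rw [dH_zero_right] at h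
  have hratio : korNorm ξ ^ 4 / lam ^ 4 * g 0 ≤ g 0 :=
    calc korNorm ξ ^ 4 / lam ^ 4 * g 0 ≤ korNorm ξ ^ 4 / lam ^ 4 * g (Phi ξ lam β 0) :=
          mul_le_mul_of_nonneg_left (hmin _) (by positivity)
      _ = g 0 := h.symm
  rw [← div_le_one (by positivity)]
  nlinarith

theorem eq_mul_sq_add_of_symm (hA : 0 < A) (hg : Continuous g) (hg0 : 0 < g 0)
    (hmin : ∀ p, g 0 ≤ g p) (hlim : Tendsto (fun p => g p / korNorm p ^ 4) (atInftyH n) (𝓝 A))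
    (hsym : ∀ ξ, ∃ lam, 0 < lam ∧ InversionSymmetricAt g β ξ lam)
    (z : Fin n → ℂ) (t : ℝ) : g (z, t) = A * t ^ 2 + g (z, 0) := by
  have hline : ∀ ξ : Heis n, 0 < g ξ ∧
      (∀ s, s ≠ 0 → g (ξ.1, ξ.2 + s) = s ^ 2 / (g ξ / A) * g (ξ.1, ξ.2 + g ξ / A / s)) ∧
      (ξ ≠ 0 → A * korNorm ξ ^ 4 ≤ g ξ) := by
    intro ξ
    obtain ⟨lam, hlam, hξ⟩ := hsym ξ
    have hval := hξ.mul_pow_four_eq hg (tendsto_mk_div_sq hlim ξ.1) hlam.ne'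
    have hlam4 : lam ^ 4 = g ξ / A := by rw [← hval]; field_simp
    refine ⟨hval ▸ by positivity, fun s => hlam4 ▸ hξ.apply_mk_add (s := s), fun hξ0 => hval ▸ ?_⟩
    exact mul_le_mul_of_nonneg_left (hξ.korNorm_pow_four_le hg0 hmin hlam hξ0) hA.le
  obtain ⟨p, hp⟩ := exists_eq_mul_sq_add_mul_add (G := fun t => g (z, t)) hA (by fun_prop)
    (fun t => (hline (z, t)).1) (fun t => (hline (z, t)).2.1) (tendsto_mk_div_sq hlim z)
  have hp0 : p = 0 := by
    refine eq_zero_of_forall_ne_zero_le_mul_add (c := A * nsq z ^ 2) (q := g (z, 0)) fun t ht => ?_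
    have := (hline (z, t)).2.2 (by simp [ht])
    rw [korNorm_pow_four, hp t] at this
    linarith
  rw [hp t, hp0, zero_mul, add_zero]

end Heis

theorem t_derivative_and_representation_general (n : ℕ) (ν : ℝ) (hν : 0 < ν)
    (f : Heis n → ℝ) (hcont : Continuous f) (hpos : ∀ p, 0 < f p)
    (hmax : ∀ p, f p ≤ f 0)
    (α : ℝ) (hα : 0 < α)
    (hlim : Tendsto (fun ζ => korNorm ζ ^ ν * f ζ) (atInftyH n) (nhds α))
    (β : ℝ)
    (hsym : ∀ ξ : Heis n, ∃ lam : ℝ, 0 < lam ∧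
      ∀ ζ : Heis n, ζ ≠ ξ → (lam / dH ξ ζ) ^ ν * f (Phi ξ lam β ζ) = f ζ) :
    (∀ ξ : Heis n, HasDerivAt (fun s : ℝ => f (ξ.1, s))
      (-(ν / 2) * α ^ (-(4 / ν)) * ξ.2 * f ξ ^ (1 + 4 / ν)) ξ.2) ∧
    ∃ F : (Fin n → ℂ) → ℝ, ∀ (z : Fin n → ℂ) (t : ℝ),
      f (z, t) = (F z ^ 2 + α ^ (-(4 / ν)) * t ^ 2) ^ (-(ν / 4)) := by
  set A := α ^ (-(4 / ν))
  set g : Heis n → ℝ := fun p => f p ^ (-(4 / ν)) with hg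
  have hgpos : ∀ p, 0 < g p := fun p => Real.rpow_pos_of_pos (hpos p) _
  have hfg : ∀ p, f p = g p ^ (-(ν / 4)) := fun p => by
    rw [hg, ← Real.rpow_mul (hpos p).le, show -(4 / ν) * -(ν / 4) = 1 by field_simp,
      Real.rpow_one]
  have hmin : ∀ p, g 0 ≤ g p := fun p =>
    Real.rpow_le_rpow_of_nonpos (hpos p) (hmax p) (by simp [div_nonneg, hν.le])
  have hlimg : Tendsto (fun p => g p / korNorm p ^ 4) (atInftyH n) (𝓝 A) :=
    (hlim.rpow_const (Or.inl hα.ne')).congr fun p =>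
      Real.rpow_mul_rpow_neg_div (korNorm_nonneg p) (hpos p).le hν.ne'
  have hsymg : ∀ ξ, ∃ lam, 0 < lam ∧ InversionSymmetricAt g β ξ lam := fun ξ =>
    (hsym ξ).imp fun lam ⟨hlam, hξ⟩ => ⟨hlam, fun ζ hζ => by
      simp only [hg]
      rw [← hξ ζ hζ, Real.rpow_mul_rpow_neg_div (by positivity [dH_nonneg ξ ζ]) (hpos _).le hν.ne',
        div_pow, div_div_eq_mul_div]
      ring⟩
  have hquad := eq_mul_sq_add_of_symm (g := g) (A := A) (Real.rpow_pos_of_pos hα _)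
    (hcont.rpow_const fun p => Or.inl (hpos p).ne') (hgpos 0) hmin hlimg hsymg
  have hline : ∀ z, (fun s => f (z, s)) = fun s => (A * s ^ 2 + g (z, 0)) ^ (-(ν / 4)) :=
    fun z => funext fun s => by rw [hfg, hquad]
  refine ⟨fun ξ => ?_, ⟨fun z => √(g (z, 0)), fun z t => ?_⟩⟩
  · rw [hline, show f ξ = _ from congrFun (hline ξ.1) ξ.2]
    exact hasDerivAt_rpow_mul_sq_add hν.ne' (by positivity [hgpos (ξ.1, 0)])
  · rw [hfg, hquad, Real.sq_sqrt (hgpos _).le, add_comm]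

/-- the t-derivative identity and the resulting representation
f(z,t) = (F(z)² + α^{−4/ν} t²)^{−ν/4}. -/
theorem t_derivative_and_representation (n : ℕ) (hn : 1 ≤ n) (ν : ℝ) (hν : 0 < ν)
    (f : Heis n → ℝ) (hcont : Continuous f) (hpos : ∀ p, 0 < f p)
    (hmax : ∀ p, f p ≤ f 0)
    (α : ℝ) (hα : 0 < α)
    (hlim : Tendsto (fun ζ => korNorm ζ ^ ν * f ζ) (atInftyH n) (nhds α))
    (β : ℝ) (hβ : β = α ^ (2 / ν) * f 0 ^ (-(2 / ν)))
    (hsym : ∀ ξ : Heis n, ∃ lam : ℝ, 0 < lam ∧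
      ∀ ζ : Heis n, ζ ≠ ξ → (lam / dH ξ ζ) ^ ν * f (Phi ξ lam β ζ) = f ζ) :
    (∀ ξ : Heis n, HasDerivAt (fun s : ℝ => f (ξ.1, s))
      (-(ν / 2) * α ^ (-(4 / ν)) * ξ.2 * f ξ ^ (1 + 4 / ν)) ξ.2) ∧
    ∃ F : (Fin n → ℂ) → ℝ, ∀ (z : Fin n → ℂ) (t : ℝ),
      f (z, t) = (F z ^ 2 + α ^ (-(4 / ν)) * t ^ 2) ^ (-(ν / 4)) :=
  t_derivative_and_representation_general n ν hν f hcont hpos hmax α hα hlim β hsym
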